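/- arXiv:2405.09393 — 8 statements merged into one kernel-verified Lean document; each statement's English description precedes it below -/
import Mathlib

section
/- Let u be a word of length n with basic period π(u) (its smallest nontrivial period), and let p be any nontrivial period of u. Then either p = k·π(u) for some integer k with 1 ≤ k ≤ ⌊n/π(u)⌋, or p > n − π(u). -/
/-- `w` has period `p`: `w[i] = w[i+p]` whenever `i + p < w.length`. -/
def IsPeriod {α : Type*} (w : List α) (p : ℕ) : Prop :=
  ∀ i : ℕ, i + p < w.length → w[i]? = w[i + p]?

lemma isPeriod_sub {α : Type*} (u : List α) (p q : ℕ) (hq : q < p)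
    (hp : IsPeriod u p) (hqper : IsPeriod u q) (hsum : p + q ≤ u.length) :
    IsPeriod u (p - q) := by
  intro i hi
  rcases lt_or_ge (i + p) u.length with h | h
  · have h1 := hp i h
    have h2 := hqper (i + (p - q)) (by omega)
    rw [h1, h2]
    congr 1
    omega
  · have h1 := hqper (i - q) (by omega)
    have h2 := hp (i - q) (by omega)
    have he : i - q + q = i := by omega
    rw [he] at h1
    rw [← h1, h2]
    congr 1
    omega

theorem stmt2 {α : Type*} (u : List α) (n π p : ℕ) (hn : u.length = n)
    (hπ1 : 0 < π) (hπ2 : π < n) (hπper : IsPeriod u π)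
    (hmin : ∀ q, 0 < q → q < n → IsPeriod u q → π ≤ q)
    (hp1 : 0 < p) (hp2 : p < n) (hpper : IsPeriod u p) :
    (∃ k, 1 ≤ k ∧ k ≤ n / π ∧ p = k * π) ∨ n - π < p := by
  by_cases hle : p ≤ n - π
  · left
    have key : ∀ q, 0 < q → IsPeriod u q → q + π ≤ n → π ∣ q := by
      intro q
      induction q using Nat.strong_induction_on with
      | _ q ih =>
        intro hq0 hqper hqn
        rcases lt_trichotomy q π with h | h | h
        · exact absurd (hmin q hq0 (by omega) hqper) (by omega)
        · exact h ▸ dvd_refl π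
        · have hsub : IsPeriod u (q - π) :=
            isPeriod_sub u q π h hqper hπper (by omega)
          have hd := ih (q - π) (by omega) (by omega) hsub (by omega)
          have := Nat.dvd_add hd (dvd_refl π)
          rwa [Nat.sub_add_cancel (le_of_lt h)] at this
    have hdvd : π ∣ p := key p hp1 hpper (by omega)
    obtain ⟨k, hk⟩ := hdvd
    rw [mul_comm] at hk
    refine ⟨k, by nlinarith [hπ1, hp1], ?_, hk⟩
    rw [Nat.le_div_iff_mul_le hπ1]
    omega
  · right; omega
end

section
/- Let u be a word of length n with autocorrelation s, and let 0 ≤ p ≤ q < n with s[p] = 1. Then s[q] = 1 if and only if the suffix u[p..n-1] has period (q - p). -/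
/-- The autocorrelation bit at `q` is `1` iff the suffix starting at `p` has period `q - p`,
given that the bit at `p` is `1` (i.e. `p` is a period of `u`). -/
theorem stmt3 {α : Type*} (u : List α) (n p q : ℕ) (hn : u.length = n)
    (hpq : p ≤ q) (hq : q < n) (hp : IsPeriod u p) :
    IsPeriod u q ↔ IsPeriod (u.drop p) (q - p) := by
  subst hn
  constructor
  · intro hqp i hi
    rw [List.length_drop] at hi
    rw [List.getElem?_drop, List.getElem?_drop]
    have e1 : p + i = i + p := by omega
    have e2 : p + (i + (q - p)) = i + q := by omega
    rw [e1, e2]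
    have h1 := hp i (by omega)
    have h2 := hqp i (by omega)
    rw [← h1, h2]
  · intro h i hi
    have h1 := hp i (by omega)
    have h2 := h i (by rw [List.length_drop]; omega)
    rw [List.getElem?_drop, List.getElem?_drop] at h2
    have e1 : p + i = i + p := by omega
    have e2 : p + (i + (q - p)) = i + q := by omega
    rw [e1, e2] at h2
    rw [h1, h2]
end

section
/- For any correlation t of length n, the number of ordered pairs (u,v) of words of length n over Σ with c(u,v) = t equals the number of words w of length 2n over Σ whose autocorrelation has t as a suffix. That is, p(t) = g(t). -/
/-!
Split a word `w` of length `2n` into halves, `w = v u`. At shift `n + i` the autocorrelation of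
`w` compares only letters of the second half `u` with letters of the first half `v`, so its bit
is exactly `c(u, v)[i]`. Hence `w ↦ (u, v)` is a bijection from `G(t)` onto `P(t)`.
-/

/-- Correlation of two words of length `m` (as functions `Fin m → α`):
bit `i` is `1` iff `u[i+k] = v[k]` for all `k` with `i + k < m`. -/
def corrF {α : Type*} [DecidableEq α] {m : ℕ} (u v : Fin m → α) : Fin m → Bool :=
  fun i => decide (∀ j k : Fin m, (j : ℕ) = (i : ℕ) + (k : ℕ) → u j = v k)

section Correlation

variable {α : Type*}

theorem corrF_add_eq_corrF_suffix_prefix [DecidableEq α] {m n N : ℕ} (h : m + n = N)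
    (w w' : Fin N → α) (i : Fin n) :
    corrF w w' ⟨m + i, by omega⟩ =
      corrF (fun k : Fin n => w ⟨m + k, by omega⟩) (fun k : Fin n => w' ⟨k, by omega⟩) i := by
  unfold corrF
  rw [decide_eq_decide]
  constructor
  · intro H j k hjk
    exact H _ _ (by simp only [hjk]; omega)
  · intro H j k hjk
    simp only at hjk
    have hkj := H ⟨j - m, by omega⟩ ⟨k, by omega⟩ (by simp only; omega)
    simpa only [show m + (j - m) = (j : ℕ) by omega] using hkj

/-- Splits `w = v u` into `(u, v)`. -/
def halvesEquiv (n : ℕ) : (Fin (2 * n) → α) ≃ (Fin n → α) × (Fin n → α) :=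
  ((finCongr (two_mul n)).arrowCongr (Equiv.refl α)).trans
    ((Fin.appendEquiv n n).symm.trans (Equiv.prodComm _ _))

theorem halvesEquiv_apply (n : ℕ) (w : Fin (2 * n) → α) :
    halvesEquiv n w = (fun k : Fin n => w ⟨n + k, by omega⟩, fun k : Fin n => w ⟨k, by omega⟩) :=
  rfl

end Correlation

/-- `p(t) = g(t)`: the number of pairs `(u,v)` of words of length `n` with correlation `t`
equals the number of words `w` of length `2n` whose autocorrelation has `t` as a suffix. -/
theorem stmt6 {α : Type*} [DecidableEq α] (n : ℕ) (t : Fin n → Bool) :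
    Nat.card {p : (Fin n → α) × (Fin n → α) // corrF p.1 p.2 = t} =
      Nat.card {w : Fin (2 * n) → α //
        ∀ i : Fin n, corrF w w ⟨n + (i : ℕ), by have := i.isLt; omega⟩ = t i} := by
  refine Nat.card_congr (Equiv.subtypeEquiv (halvesEquiv n) fun w => ?_).symm
  simp only [halvesEquiv_apply, funext_iff]
  exact forall_congr' fun i => by rw [corrF_add_eq_corrF_suffix_prefix (two_mul n).symm]
end

section
/- Let n ≥ 1 and let t = 0^{n-j} s where 1 ≤ j ≤ n and s is the autocorrelation of some word of length j over alphabet Σ with |Σ| = σ ≥ 2. Then the cardinality of the right population P_r(t) = { v ∈ Σ^n : there exists u ∈ Σ^n with c(u,v) = t } equals p(s)·σ^{n-j}, where p(s) is the number of words of length j with autocorrelation s. -/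
/-!
Bit `n - j` of `t` is `s 0 = 1`, so any `u` with `c(u,v) = t` ends with the length-`j` prefix `w`
of `v`, and then the last `j` bits of `c(u,v)` are exactly the autocorrelation of `w`. Conversely,
if `c(w,w) = s`, padding `w` on the left with `n - j` copies of a letter different from `v 0`
produces a `u` with `c(u,v) = t`. Hence `v` lies in the right population iff its prefix of
length `j` has autocorrelation `s`, and the remaining `n - j` letters of `v` are free.
-/

section Correlation

variable {α : Type*} [DecidableEq α]

theorem corrF_eq_true_iff {m : ℕ} (u v : Fin m → α) (i : Fin m) :
    corrF u v i = true ↔ ∀ a b : Fin m, (a : ℕ) = i + b → u a = v b :=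
  decide_eq_true_iff

theorem corrF_self_zero {m : ℕ} (z : Fin m → α) (hm : 0 < m) : corrF z z ⟨0, hm⟩ = true :=
  (corrF_eq_true_iff z z _).2 fun a b hab => congrArg z (Fin.ext (by simpa using hab))

variable {n j : ℕ} (hjn : j ≤ n)
include hjn

theorem corrF_shift {u v : Fin n → α}
    (hsuf : ∀ k : Fin j, u ⟨n - j + k, by omega⟩ = Fin.take j hjn v k) (k : Fin j) :
    corrF u v ⟨n - j + k, by omega⟩ = corrF (Fin.take j hjn v) (Fin.take j hjn v) k := by
  rw [Bool.eq_iff_iff, corrF_eq_true_iff, corrF_eq_true_iff]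
  constructor
  · intro h a b hab
    rw [← hsuf a]
    exact h _ ⟨b, by omega⟩ (by simp only at hab ⊢; omega)
  · intro h a b hab
    simp only at hab
    have hkb : (k : ℕ) + b < j := by omega
    rw [show a = ⟨n - j + (k + b), by omega⟩ from Fin.ext (by simp only; omega),
      hsuf ⟨k + b, hkb⟩]
    exact h ⟨k + b, hkb⟩ ⟨b, by omega⟩ rfl

theorem corrF_shift_of_corrF_eq_true {u v : Fin n → α} (hj : 0 < j)
    (h : corrF u v ⟨n - j, by omega⟩ = true) (k : Fin j) :
    corrF u v ⟨n - j + k, by omega⟩ = corrF (Fin.take j hjn v) (Fin.take j hjn v) k :=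
  corrF_shift hjn (fun _ => (corrF_eq_true_iff u v _).1 h _ _ rfl) k

variable {s : Fin j → Bool} {t : Fin n → Bool}
    (hts : ∀ i : Fin j, t ⟨n - j + (i : ℕ), by omega⟩ = s i)
include hts

theorem corrF_take_eq_of_corrF_eq (hj : 0 < j) (hs : s ⟨0, hj⟩ = true) {u v : Fin n → α}
    (huv : corrF u v = t) : corrF (Fin.take j hjn v) (Fin.take j hjn v) = s := by
  have h : corrF u v ⟨n - j, by omega⟩ = true := huv ▸ (hts ⟨0, hj⟩).trans hs
  funext k
  rw [← corrF_shift_of_corrF_eq_true hjn hj h, huv, hts]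

theorem exists_corrF_eq_of_corrF_take_eq [Nontrivial α] (hn : 0 < n)
    (htz : ∀ i : Fin n, (i : ℕ) < n - j → t i = false) {v : Fin n → α}
    (hv : corrF (Fin.take j hjn v) (Fin.take j hjn v) = s) : ∃ u, corrF u v = t := by
  obtain ⟨c, hc⟩ := exists_ne (v ⟨0, hn⟩)
  let u : Fin n → α := fun i =>
    if h : (i : ℕ) < n - j then c else v ⟨i - (n - j), by omega⟩
  have hsuf : ∀ k : Fin j, u ⟨n - j + k, by omega⟩ = Fin.take j hjn v k := fun k => by
    simp [u, Fin.take, Fin.castLE]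
  refine ⟨u, funext fun i => ?_⟩
  by_cases hi : (i : ℕ) < n - j
  · rw [htz i hi, Bool.eq_false_iff]
    intro H
    exact hc (by simpa [u, hi] using (corrF_eq_true_iff u v i).1 H i ⟨0, hn⟩ rfl)
  · let k : Fin j := ⟨i - (n - j), by omega⟩
    rw [show i = ⟨n - j + k, by omega⟩ from Fin.ext (by simp only [k]; omega),
      corrF_shift hjn hsuf, hv, hts]

end Correlation

theorem Nat.card_subtype_take {α : Type*} [Fintype α] {n j : ℕ} (hjn : j ≤ n)
    (P : (Fin j → α) → Prop) :
    Nat.card {v : Fin n → α // P (Fin.take j hjn v)} =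
      Nat.card {z // P z} * Fintype.card α ^ (n - j) := by
  obtain ⟨d, rfl⟩ := Nat.exists_eq_add_of_le hjn
  let e : {v : Fin (j + d) → α // P (Fin.take j hjn v)} ≃ {z // P z} × (Fin d → α) :=
    ((Fin.appendEquiv j d).symm.subtypeEquiv fun _ => Iff.rfl).trans
      Equiv.prodSubtypeFstEquivSubtypeProd
  rw [Nat.card_congr e, Nat.card_prod, Nat.card_fun, Nat.card_eq_fintype_card (α := Fin d)]
  simp

/-- The right population of `t = 0^{n-j} s` has cardinality `p(s) · σ^{n-j}`. -/
theorem stmt8 {α : Type*} [DecidableEq α] [Fintype α] (hσ : 2 ≤ Fintype.card α)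
    (n j : ℕ) (hj : 1 ≤ j) (hjn : j ≤ n) (s : Fin j → Bool)
    (hs : ∃ z : Fin j → α, corrF z z = s)
    (t : Fin n → Bool)
    (htz : ∀ i : Fin n, (i : ℕ) < n - j → t i = false)
    (hts : ∀ i : Fin j, t ⟨n - j + (i : ℕ), by have := i.isLt; omega⟩ = s i) :
    Nat.card {v : Fin n → α // ∃ u : Fin n → α, corrF u v = t} =
      Nat.card {z : Fin j → α // corrF z z = s} * Fintype.card α ^ (n - j) := by
  have : Nontrivial α := Fintype.one_lt_card_iff_nontrivial.1 hσ
  obtain ⟨z, hz⟩ := hs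
  have hs0 : s ⟨0, hj⟩ = true := hz ▸ corrF_self_zero z hj
  have hpop : ∀ v : Fin n → α,
      (∃ u, corrF u v = t) ↔ corrF (Fin.take j hjn v) (Fin.take j hjn v) = s := fun v =>
    ⟨fun ⟨_, huv⟩ => corrF_take_eq_of_corrF_eq hjn hts hj hs0 huv,
      exists_corrF_eq_of_corrF_take_eq hjn hts (by omega) htz⟩
  rw [Nat.card_congr (Equiv.subtypeEquivRight hpop)]
  exact Nat.card_subtype_take hjn (fun z => corrF z z = s)
end

section
/- Every correlation of a pair of words of length n is of the form 0^{n-j} s, where 0 ≤ j ≤ n and s is the autocorrelation of some word of length j. That is, if t = c(u,v) for some u,v ∈ Σ^n and t ≠ 0^n, and j is the largest index such that t[n-j] = 1 (i.e., j is the length of the longest border of (u,v)), then the suffix of t of length j equals the autocorrelation of the word z = u[n-j..n-1] (the longest border of (u,v)). -/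
/-- The correlation of `(u,v)`: bit `i` is `1` iff the suffix of `u` starting at `i`
equals the prefix of `v` of the same length. -/
def corr {α : Type*} [DecidableEq α] (u v : List α) : List Bool :=
  (List.range u.length).map fun i => decide (u.drop i = v.take (u.length - i))

/-! A border `z = u.drop i = v.take m` of `(u, v)` sees every later bit of `c(u, v)` as a bit
of `c(z, z)`: the suffix `u.drop (i + k)` is `z.drop k`, and the prefix `v.take (m - k)` is
`z.take (m - k)`. -/

section Correlation

variable {α : Type*} [DecidableEq α]

@[simp]
theorem length_corr (u v : List α) : (corr u v).length = u.length := by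
  simp [corr]

theorem getElem_corr (u v : List α) (i : ℕ) (hi : i < (corr u v).length) :
    (corr u v)[i] = decide (u.drop i = v.take (u.length - i)) := by
  simp [corr]

theorem drop_eq_take_of_corr_getElem?_eq_some_true {u v : List α} {i : ℕ}
    (h : (corr u v)[i]? = some true) : u.drop i = v.take (u.length - i) := by
  obtain ⟨hi, hbit⟩ := List.getElem?_eq_some_iff.mp h
  simpa [getElem_corr] using hbit

theorem corr_drop_eq_corr_of_drop_eq_take {u v : List α} {i : ℕ}
    (h : u.drop i = v.take (u.length - i)) :
    (corr u v).drop i = corr (u.drop i) (u.drop i) := by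
  apply List.ext_getElem (by simp)
  intro k hk _
  have hprefix : (u.drop i).take (u.length - i - k) = v.take (u.length - (i + k)) := by
    rw [h, List.take_take, Nat.sub_add_eq]
    congr 1
    omega
  simp only [List.getElem_drop, getElem_corr, List.drop_drop, List.length_drop, hprefix]

end Correlation

theorem stmt9_general {α : Type*} [DecidableEq α] (n j : ℕ) (u v : List α)
    (hone : (corr u v)[n - j]? = some true) :
    (corr u v).drop (n - j) = corr (u.drop (n - j)) (u.drop (n - j)) :=
  corr_drop_eq_corr_of_drop_eq_take (drop_eq_take_of_corr_getElem?_eq_some_true hone)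

/-- Every nonzero correlation is `0^{n-j} s` where `s` is the autocorrelation of the
longest border `z = u[n-j .. n-1]`. -/
theorem stmt9 {α : Type*} [DecidableEq α] (n j : ℕ) (u v : List α)
    (hu : u.length = n) (hv : v.length = n) (hj : 0 < j) (hjn : j ≤ n)
    (hone : (corr u v)[n - j]? = some true)
    (hzero : ∀ i < n - j, (corr u v)[i]? = some false) :
    (corr u v).drop (n - j) = corr (u.drop (n - j)) (u.drop (n - j)) :=
  stmt9_general n j u v hone
end

section
/- Let n > 0, let w be a word of length j with 0 < j < n whose first letter is a, and let u = b^{n-j} w over the binary alphabet {a,b} (a ≠ b). Then for every word v of length n that has w as a prefix, the correlation c(u,v) equals 0^{n-j} s, where s = c(w,w) is the autocorrelation of w. -/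
open List

theorem drop_replicate_append_ne_take {α : Type*} {a b : α} (hab : a ≠ b) {m i k : ℕ}
    (hi : i < m) (hk : k ≠ 0) (w : List α) {v : List α} (hv : v.head? = some a) :
    (replicate m b ++ w).drop i ≠ v.take k := by
  intro h
  simpa [drop_append, head?_take, head?_replicate, hk, hv, Nat.sub_eq_zero_iff_le, not_le.2 hi,
    hab.symm] using congrArg head? h

section Correlation

variable {α : Type*} [DecidableEq α]

theorem corr_append (x w v : List α) :
    corr (x ++ w) v =
      (range x.length).map (fun i => decide ((x ++ w).drop i = v.take (x.length + w.length - i)))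
        ++ corr w v := by
  simp only [corr, length_append, range_add, map_append, map_map]
  congr 1
  refine map_congr_left fun k _ => ?_
  simp [drop_append, drop_eq_nil_of_le, Nat.add_sub_add_left]

theorem corr_of_isPrefix {w v : List α} (h : w <+: v) : corr w v = corr w w := by
  refine map_congr_left fun i _ => ?_
  obtain ⟨t, rfl⟩ := h
  rw [take_append_of_le_length (Nat.sub_le ..)]

theorem corr_replicate_append {a b : α} (hab : a ≠ b) {w v : List α} (hw : w.head? = some a)
    (hwv : w <+: v) (m : ℕ) :
    corr (replicate m b ++ w) v = replicate m false ++ corr w w := by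
  have hv : v.head? = some a := by
    obtain ⟨t, rfl⟩ := hwv
    simp [head?_append, hw]
  rw [corr_append, corr_of_isPrefix hwv, length_replicate]
  congr 1
  refine eq_replicate_iff.2 ⟨by simp, ?_⟩
  simp only [mem_map, mem_range, forall_exists_index, and_imp, forall_apply_eq_imp_iff₂,
    decide_eq_false_iff_not]
  intro i hi
  exact drop_replicate_append_ne_take hab hi (by omega) w hv

end Correlation

theorem stmt11_general {α : Type*} [DecidableEq α] (a b : α) (hab : a ≠ b) (n j : ℕ)
    (w : List α)
    (hhead : w.head? = some a) (v : List α) (hpre : w <+: v) :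
    corr (List.replicate (n - j) b ++ w) v =
      List.replicate (n - j) false ++ corr w w :=
  corr_replicate_append hab hhead hpre (n - j)

/-- If `u = b^{n-j} w` with `w` starting with `a ≠ b`, then for any `v` of length `n`
with prefix `w`, the correlation `c(u,v)` is `0^{n-j}` followed by the autocorrelation
of `w`. -/
theorem stmt11 {α : Type*} [DecidableEq α] (a b : α) (hab : a ≠ b) (n j : ℕ)
    (hj : 0 < j) (hjn : j < n) (w : List α) (hw : w.length = j)
    (hhead : w.head? = some a) (v : List α) (hv : v.length = n) (hpre : w <+: v) :
    corr (List.replicate (n - j) b ++ w) v =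
      List.replicate (n - j) false ++ corr w w :=
  stmt11_general a b hab n j w hhead v hpre
end

section
/- The set Δ_n of all correlations of pairs of words of length n over an alphabet with at least two letters, ordered by set inclusion (viewing binary vectors as subsets of positions), is closed under intersection: if t, t' ∈ Δ_n then t ∩ t' ∈ Δ_n. -/
namespace List

variable {α β : Type*}

theorem hasPeriod_iff_drop_prefix {w : List α} {p : ℕ} : w.HasPeriod p ↔ w.drop p <+: w :=
  ⟨HasPeriod.drop_prefix p, fun h => by
    rw [HasPeriod]; simpa only [take_append_drop] using (prefix_append_right_inj (w.take p)).2 h⟩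

theorem IsPrefix.drop_prefix_iff_hasPeriod {s y : List α} (h : s <+: y) (k : ℕ) :
    s.drop k <+: y ↔ s.HasPeriod k := by
  rw [hasPeriod_iff_drop_prefix]
  exact ⟨fun hk => prefix_of_prefix_length_le hk h (by simp), fun hk => hk.trans h⟩

theorem HasPeriod.hasPeriod_iff_drop {w : List α} {p d : ℕ} (h : w.HasPeriod p) (hd : p ≤ d) :
    w.HasPeriod d ↔ (w.drop p).HasPeriod (d - p) := by
  obtain ⟨e, rfl⟩ := Nat.exists_eq_add_of_le hd
  rw [hasPeriod_iff_drop_prefix, ← drop_drop, Nat.add_sub_cancel_left]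
  exact (hasPeriod_iff_drop_prefix.1 h).drop_prefix_iff_hasPeriod e

theorem hasPeriod_iff_of_isLeast {w : List α} {p : ℕ}
    (h : IsLeast {q | 0 < q ∧ w.HasPeriod q} p) (d : ℕ) :
    w.HasPeriod d ↔ d = 0 ∨ p ≤ d ∧ (w.drop p).HasPeriod (d - p) := by
  obtain ⟨⟨hp, hper⟩, hmin⟩ := h
  rcases lt_or_ge d p with hdp | hpd
  · refine ⟨fun hd => (Nat.eq_zero_or_pos d).imp_right fun hd0 =>
      absurd (hmin ⟨hd0, hd⟩) (not_le.2 hdp), ?_⟩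
    rintro (rfl | ⟨hle, -⟩)
    · exact hasPeriod_zero w
    · omega
  · rw [hper.hasPeriod_iff_drop hpd]
    simp [hpd, show d ≠ 0 by omega]

theorem hasPeriod_map_iff {f : α → β} (hf : Function.Injective f) {w : List α} {d : ℕ} :
    (w.map f).HasPeriod d ↔ w.HasPeriod d := by
  simp only [hasPeriod_iff_getElem?, length_map, getElem?_map, (Option.map_injective hf).eq_iff]

theorem hasPeriod_iff_getElem {w : List α} {d : ℕ} :
    w.HasPeriod d ↔ ∀ i (h : i + d < w.length), w[i] = w[i + d] := by
  rw [hasPeriod_iff_getElem?]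
  refine ⟨fun h i hi => ?_, fun h i hi => ?_⟩
  · simpa [getElem?_eq_getElem hi, getElem?_eq_getElem (show i < w.length by omega)] using
      h i (by omega)
  · rw [getElem?_eq_getElem (by omega), getElem?_eq_getElem (by omega), h i (by omega)]

theorem hasPeriod_zip_iff {s : List α} {t : List β} (hst : s.length = t.length) {d : ℕ} :
    (s.zip t).HasPeriod d ↔ s.HasPeriod d ∧ t.HasPeriod d := by
  simp only [hasPeriod_iff_getElem, getElem_zip, Prod.ext_iff, length_zip, hst, min_self]
  exact ⟨fun h => ⟨fun i hi => (h i (by omega)).1, fun i hi => (h i hi).2⟩,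
    fun h i hi => ⟨h.1 i (by omega), h.2 i hi⟩⟩

theorem HasPeriod.forall_eq_of_getElem?_Ico_eq {w : List α} {g p : ℕ} {c : α}
    (h : w.HasPeriod g) (hg : 0 < g) (hgp : g ∣ p) (hp : 0 < p) (hpw : p ≤ w.length)
    (hc : ∀ i, p - g ≤ i → i < p → w[i]? = some c) : ∀ x ∈ w, x = c := by
  have hmod := hasPeriod_iff_forall_getElem?_mod.1 h
  have hgp' : g ≤ p := Nat.le_of_dvd hp hgp
  intro x hx
  obtain ⟨i, hi, rfl⟩ := getElem_of_mem hx
  have hr : (p - g + i % g) % g = i % g := by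
    obtain ⟨k, rfl⟩ := hgp
    rw [show g * k - g = g * (k - 1) by rw [Nat.mul_sub_one], Nat.mul_add_mod, Nat.mod_mod]
  have hi' : i % g < g := Nat.mod_lt i hg
  have := hc (p - g + i % g) (by omega) (by omega)
  rw [hmod _ (by omega), hr, ← hmod i hi, getElem?_eq_getElem hi] at this
  simpa using this

section AppendReplicateAppend

variable {B : List α} {m : ℕ} {c c' : α}

theorem getElem?_append_replicate_append (j : ℕ) :
    (B ++ replicate m c ++ B)[j]? =
      if j < B.length then B[j]? else if j < B.length + m then some c
      else B[j - (B.length + m)]? := by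
  simp only [getElem?_append, length_append, length_replicate, getElem?_replicate]
  split_ifs <;> first | rfl | omega

theorem getElem?_append_replicate_append_of_mem_Ico {j : ℕ} (hj : B.length ≤ j)
    (hj' : j < B.length + m) : (B ++ replicate m c ++ B)[j]? = some c := by
  rw [getElem?_append_replicate_append, if_neg (by omega), if_pos hj']

theorem getElem?_append_replicate_append_congr {j : ℕ} (hj : j < B.length ∨ B.length + m ≤ j) :
    (B ++ replicate m c ++ B)[j]? = (B ++ replicate m c' ++ B)[j]? := by
  simp only [getElem?_append_replicate_append]
  split_ifs <;> first | rfl | omega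

/-- Such a period `q` forces `B c^k = c^k B` with `k = |B| + m - q > 0`. -/
theorem HasPeriod.forall_eq_of_lt_of_append_replicate_append {q : ℕ}
    (h : (B ++ replicate m c ++ B).HasPeriod q) (hlq : B.length < q) (hq : q < B.length + m) :
    ∀ x ∈ B, x = c := by
  have hB : ∀ i < B.length, B[i]? = some c := by
    intro i
    induction i using Nat.strong_induction_on with
    | _ i ih =>
      intro hi
      have hi' := hasPeriod_iff_getElem?.1 h i (by simp; omega)
      simp only [getElem?_append_replicate_append, if_pos hi,
        if_neg (show ¬ i + q < B.length by omega)] at hi'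
      split_ifs at hi' with hiq
      · exact hi'
      · rw [hi', ih _ (by omega) (by omega)]
  intro x hx
  obtain ⟨i, hi, rfl⟩ := getElem_of_mem hx
  simpa [getElem?_eq_getElem hi] using hB i hi

theorem HasPeriod.append_replicate_append_cases {q : ℕ}
    (h : (B ++ replicate m c ++ B).HasPeriod q) (hq : 0 < q) (hqp : q < B.length + m) :
    (∀ x ∈ B, x = c) ∨ ∃ g, m < g ∧ g ≤ B.length ∧ (B ++ replicate m c ++ B).HasPeriod g := by
  rcases lt_or_ge B.length q with hlq | hql
  · exact Or.inl (h.forall_eq_of_lt_of_append_replicate_append hlq hqp)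
  have hp : (B ++ replicate m c ++ B).HasPeriod (B.length + m) :=
    hasPeriod_iff_drop_prefix.2 (by simp)
  have hg := hp.gcd h (by simp; omega)
  have hg0 : 0 < (B.length + m).gcd q := Nat.gcd_pos_of_pos_right _ hq
  have hgq : (B.length + m).gcd q ≤ q := Nat.gcd_le_right _ hq
  rcases lt_or_ge m ((B.length + m).gcd q) with hmg | hgm
  · exact Or.inr ⟨_, hmg, by omega, hg⟩
  · refine Or.inl fun x hx => hg.forall_eq_of_getElem?_Ico_eq hg0 (Nat.gcd_dvd_left _ _)
      (by omega) (by simp) (fun i hi hi' => ?_) x (mem_append_left _ (mem_append_left _ hx))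
    rw [getElem?_append_replicate_append, if_neg (by omega), if_pos hi']

theorem not_hasPeriod_append_replicate_append_of_forall_eq (hcc : c ≠ c') (hB : ∀ x ∈ B, x = c)
    (hm : 0 < m) {g : ℕ} (hg : 0 < g) (hgl : g ≤ B.length) :
    ¬ (B ++ replicate m c' ++ B).HasPeriod g := by
  intro h
  have := hasPeriod_iff_getElem?.1 h (B.length + m - 1) (by simp; omega)
  rw [getElem?_append_replicate_append_of_mem_Ico (by omega) (by omega),
    getElem?_append_replicate_append, if_neg (by omega), if_neg (by omega),
    getElem?_eq_getElem (by omega), Option.some_inj] at this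
  exact hcc (hB _ (this ▸ getElem_mem _)).symm

/-- Follow the last filler position `x` through `+g₁` (in the `c'`-word), `-g₀` (in the `c`-word)
and `-g₁` (in the `c'`-word): both words have `c'` at `x + g₁ - g₀`, so the `c'`-word has `c'` at
`x - g₀`, while the `c`-word has `c` there; yet `x - g₀ < |B|` since `m < g₀`. -/
theorem not_hasPeriod_append_replicate_append_of_hasPeriod (hcc : c ≠ c') (hm : 0 < m)
    {g₀ g₁ : ℕ} (hg₀ : m < g₀) (hg₀l : g₀ ≤ B.length) (hg₁ : 0 < g₁) (hg₁l : g₁ ≤ B.length)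
    (h₁ : (B ++ replicate m c' ++ B).HasPeriod g₁) : ¬ (B ++ replicate m c ++ B).HasPeriod g₀ := by
  intro h₀
  set x := B.length + m - 1
  have e₁ : (B ++ replicate m c' ++ B)[x + g₁]? = some c' := by
    rw [← hasPeriod_iff_getElem?.1 h₁ x (by simp; omega),
      getElem?_append_replicate_append_of_mem_Ico (by omega) (by omega)]
  have e₂ : (B ++ replicate m c ++ B)[x + g₁ - g₀]? = some c' := by
    rw [hasPeriod_iff_getElem?.1 h₀ _ (by simp; omega), Nat.sub_add_cancel (by omega),
      getElem?_append_replicate_append_congr (by omega), e₁]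
  have e₃ : (B ++ replicate m c' ++ B)[x - g₀]? = some c' := by
    have hout : x + g₁ - g₀ < B.length ∨ B.length + m ≤ x + g₁ - g₀ := by
      by_contra! hin
      rw [getElem?_append_replicate_append_of_mem_Ico hin.1 hin.2, Option.some_inj] at e₂
      exact hcc e₂
    rw [hasPeriod_iff_getElem?.1 h₁ _ (by simp; omega), show x - g₀ + g₁ = x + g₁ - g₀ by omega,
      ← getElem?_append_replicate_append_congr hout, e₂]
  have e₄ : (B ++ replicate m c ++ B)[x - g₀]? = some c := by
    rw [hasPeriod_iff_getElem?.1 h₀ _ (by simp; omega), Nat.sub_add_cancel (by omega),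
      getElem?_append_replicate_append_of_mem_Ico (by omega) (by omega)]
  rw [getElem?_append_replicate_append_congr (c' := c') (by omega), e₃, Option.some_inj] at e₄
  exact hcc e₄.symm

end AppendReplicateAppend

theorem exists_forall_not_hasPeriod_append_replicate_append {B : List Bool} (hB : B ≠ [])
    {m : ℕ} (hm : 0 < m) :
    ∃ c, ∀ q, 0 < q → q < B.length + m → ¬ (B ++ replicate m c ++ B).HasPeriod q := by
  by_contra! H
  obtain ⟨q₀, hq₀, hq₀p, h₀⟩ := H false
  obtain ⟨q₁, hq₁, hq₁p, h₁⟩ := H true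
  rcases h₀.append_replicate_append_cases hq₀ hq₀p with hB₀ | ⟨g₀, hg₀, hg₀l, hg₀'⟩ <;>
    rcases h₁.append_replicate_append_cases hq₁ hq₁p with hB₁ | ⟨g₁, hg₁, hg₁l, hg₁'⟩
  · obtain ⟨x, hx⟩ := exists_mem_of_ne_nil B hB
    exact absurd ((hB₀ x hx).symm.trans (hB₁ x hx)) Bool.false_ne_true
  · exact not_hasPeriod_append_replicate_append_of_forall_eq Bool.false_ne_true hB₀ hm
      (by omega) hg₁l hg₁'
  · exact not_hasPeriod_append_replicate_append_of_forall_eq Bool.false_ne_true.symm hB₁ hm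
      (by omega) hg₀l hg₀'
  · exact not_hasPeriod_append_replicate_append_of_hasPeriod Bool.false_ne_true hm hg₀ hg₀l
      (by omega) hg₁l hg₁' hg₀'

theorem isLeast_period_append {X B : List α} {p : ℕ} (hX : X.length = p) (hp : 0 < p)
    (hB : B <+: X ++ B) (hmin : ∀ q, 0 < q → q < p → ¬ (X ++ B).HasPeriod q) :
    IsLeast {q | 0 < q ∧ (X ++ B).HasPeriod q} p :=
  ⟨⟨hp, hasPeriod_iff_drop_prefix.2 (by rwa [drop_left' hX])⟩,
    fun q ⟨hq, hq'⟩ => not_lt.1 fun hqp => hmin q hq hqp hq'⟩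

theorem HasPeriod.take_drop_append {w : List α} {p : ℕ} (h : w.HasPeriod p)
    (hp : p ≤ (w.drop p).length) : (w.drop p).take p ++ w.drop p = w := by
  have hpre : (w.drop p).take p <+: w := (take_prefix _ _).trans (hasPeriod_iff_drop_prefix.1 h)
  rw [prefix_iff_eq_take.1 hpre, length_take, min_eq_left hp, take_append_drop]

theorem exists_isLeast_period_append (B : List Bool) {p : ℕ} (hp : 0 < p)
    (hB : p ≤ B.length → B.HasPeriod p ∧ ∀ g, 0 < g → g < p → g ∣ p → ¬ B.HasPeriod g) :
    ∃ X : List Bool, X.length = p ∧ IsLeast {q | 0 < q ∧ (X ++ B).HasPeriod q} p := by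
  rcases eq_or_ne B [] with rfl | hB0
  · refine ⟨replicate (p - 1) false ++ [true], by simp; omega,
      isLeast_period_append (by simp; omega) hp nil_prefix fun q hq hqp h => ?_⟩
    have := hasPeriod_iff_getElem?.1 h (p - 1 - q) (by simp; omega)
    simp [Nat.sub_add_cancel (show q ≤ p - 1 by omega),
      show p - 1 - q < p - 1 by omega] at this
  rcases lt_or_ge B.length p with hlp | hpl
  · obtain ⟨c, hc⟩ := exists_forall_not_hasPeriod_append_replicate_append hB0
      (Nat.sub_pos_of_lt hlp)
    rw [Nat.add_sub_cancel' hlp.le] at hc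
    exact ⟨B ++ replicate (p - B.length) c, by simp; omega,
      isLeast_period_append (by simp; omega) hp (prefix_append_of_prefix (prefix_append _ _)) hc⟩
  · obtain ⟨hBp, hBg⟩ := hB hpl
    refine ⟨B.take p, by simp [hpl], isLeast_period_append (by simp [hpl]) hp hBp ?_⟩
    intro q hq hqp h
    have hg := (HasPeriod.take_append p p B dvd_rfl hpl hBp).gcd h (by simp; omega)
    exact hBg _ (Nat.gcd_pos_of_pos_right _ hq) ((Nat.gcd_le_right _ hq).trans_lt hqp)
      (Nat.gcd_dvd_left _ _) (hg.infix (suffix_append _ _).isInfix)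

theorem exists_bool_hasPeriod_iff (w : List α) :
    ∃ z : List Bool, z.length = w.length ∧ ∀ d, z.HasPeriod d ↔ w.HasPeriod d := by
  induction hn : w.length using Nat.strong_induction_on generalizing w with
  | _ n ih =>
  rcases eq_or_ne w [] with rfl | hw
  · exact ⟨[], by simp [← hn], by simp⟩
  have hn0 : 0 < n := hn ▸ length_pos_iff.2 hw
  have hS : ∃ q, 0 < q ∧ w.HasPeriod q := ⟨n, hn0, hasPeriod_of_length_le w n hn.le⟩
  classical
  obtain ⟨p, hleast⟩ : ∃ p, IsLeast {q | 0 < q ∧ w.HasPeriod q} p := ⟨_, Nat.isLeast_find hS⟩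
  obtain ⟨⟨hp, hpw⟩, hmin⟩ := hleast
  have hpn : p ≤ n := hmin ⟨hn0, hasPeriod_of_length_le w n hn.le⟩
  obtain ⟨B, hBl, hB⟩ := ih (n - p) (by omega) (w.drop p) (by simp [hn])
  obtain ⟨X, hX, hXleast⟩ := exists_isLeast_period_append B hp fun hpl => by
    have hpu : p ≤ (w.drop p).length := by simp [hn]; omega
    refine ⟨(hB p).2 (hpw.infix (drop_suffix p w).isInfix), fun g hg hgp hgd hBg => ?_⟩
    have hwg := HasPeriod.take_append g p _ hgd hpu ((hB g).1 hBg)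
    rw [hpw.take_drop_append hpu] at hwg
    exact absurd (hmin ⟨hg, hwg⟩) (not_le.2 hgp)
  refine ⟨X ++ B, by simp [hX, hBl]; omega, fun d => ?_⟩
  rw [hasPeriod_iff_of_isLeast hXleast, hasPeriod_iff_of_isLeast ⟨⟨hp, hpw⟩, hmin⟩,
    drop_left' hX, hB]

theorem not_drop_prefix_replicate_append {a b : α} (hab : a ≠ b) (w : List α) {r i : ℕ}
    (hi : i < r) : ¬ (replicate r a ++ w).drop i <+: w ++ replicate r b := by
  classical
  intro h
  rw [drop_append_of_le_length (by simp; omega), drop_replicate] at h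
  have := congrArg (count b) (prefix_iff_eq_take.1 h)
  rw [length_append, length_replicate, Nat.add_comm, take_length_add_append, take_replicate,
    min_eq_left (by omega)] at this
  simp [count_replicate, hab] at this
  omega

theorem exists_drop_prefix_iff_and {x₁ y₁ x₂ y₂ : List α} {n : ℕ} (h₁ : x₁.length = n)
    (h₂ : x₂.length = n) {a b : α} (hab : a ≠ b) :
    ∃ x y : List α, x.length = n ∧ y.length = n ∧
      ∀ i, x.drop i <+: y ↔ x₁.drop i <+: y₁ ∧ x₂.drop i <+: y₂ := by
  classical
  have hn : x₁.drop n <+: y₁ ∧ x₂.drop n <+: y₂ := by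
    simp [drop_eq_nil_of_le, h₁.le, h₂.le]
  obtain ⟨r, ⟨hr₁, hr₂⟩, hrmin⟩ : ∃ r, IsLeast {r | x₁.drop r <+: y₁ ∧ x₂.drop r <+: y₂} r :=
    ⟨_, Nat.isLeast_find ⟨n, hn⟩⟩
  have hrn : r ≤ n := hrmin hn
  obtain ⟨z, hz, hzper⟩ := exists_bool_hasPeriod_iff ((x₁.drop r).zip (x₂.drop r))
  have hf : Function.Injective (fun c : Bool => if c then a else b) := by
    intro c c' h; cases c <;> cases c' <;> simp_all [hab.symm]
  set s := z.map fun c => if c then a else b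
  have hs : s.length = n - r := by simp [s, hz, h₁, h₂]
  refine ⟨replicate r a ++ s, s ++ replicate r b, by simp [hs]; omega, by simp [hs]; omega,
    fun i => ?_⟩
  rcases lt_or_ge i r with hir | hri
  · exact iff_of_false (not_drop_prefix_replicate_append hab s hir)
      fun h => absurd (hrmin h) (not_le.2 hir)
  obtain ⟨k, rfl⟩ := Nat.exists_eq_add_of_le hri
  rw [← drop_drop, ← drop_drop, ← drop_drop, drop_left' (length_replicate ..),
    (prefix_append s _).drop_prefix_iff_hasPeriod, hr₁.drop_prefix_iff_hasPeriod,
    hr₂.drop_prefix_iff_hasPeriod, hasPeriod_map_iff hf, hzper,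
    hasPeriod_zip_iff (by simp [h₁, h₂])]

theorem exists_ofFn_eq {l : List α} {n : ℕ} (h : l.length = n) : ∃ f : Fin n → α, ofFn f = l := by
  subst h
  exact ⟨_, ofFn_getElem⟩

end List

theorem corrF_eq_true_iff_s12 {α : Type*} [DecidableEq α] {n : ℕ} (u v : Fin n → α) (i : Fin n) :
    corrF u v i = true ↔ (List.ofFn u).drop i <+: List.ofFn v := by
  simp only [corrF, decide_eq_true_eq, List.prefix_iff_getElem, List.length_drop,
    List.length_ofFn, List.getElem_drop, List.getElem_ofFn]
  refine ⟨fun h => ⟨Nat.sub_le _ _, fun k hk => h _ _ rfl⟩, fun ⟨_, h⟩ j k hjk => ?_⟩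
  rw [show j = ⟨i + k, by omega⟩ from Fin.ext hjk]
  exact h k (by omega)

/-- `Δ_n` is closed under (bitwise) intersection. -/
theorem stmt12 {α : Type*} [DecidableEq α] [Fintype α] (hcard : 2 ≤ Fintype.card α)
    (n : ℕ) (t t' : Fin n → Bool)
    (ht : ∃ u v : Fin n → α, corrF u v = t) (ht' : ∃ u v : Fin n → α, corrF u v = t') :
    ∃ u v : Fin n → α, corrF u v = fun i => t i && t' i := by
  obtain ⟨a, b, hab⟩ := Fintype.exists_pair_of_one_lt_card hcard
  obtain ⟨u₁, v₁, rfl⟩ := ht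
  obtain ⟨u₂, v₂, rfl⟩ := ht'
  obtain ⟨x, y, hx, hy, hxy⟩ :=
    List.exists_drop_prefix_iff_and (List.length_ofFn (f := u₁)) (List.length_ofFn (f := u₂)) hab
  obtain ⟨u, rfl⟩ := List.exists_ofFn_eq hx
  obtain ⟨v, rfl⟩ := List.exists_ofFn_eq hy
  refine ⟨u, v, funext fun i => ?_⟩
  rw [Bool.eq_iff_iff, Bool.and_eq_true, corrF_eq_true_iff_s12, corrF_eq_true_iff_s12, corrF_eq_true_iff_s12,
    hxy]
end

section
/- For every n > 2, the chain 0^n ≺ 0^{n-1}1 ≺ 0^{n-2}1^2 ≺ ⋯ ≺ 0·1^{n-1} ≺ 1^n is a chain of length n in Δ_n consisting entirely of valid correlations; i.e., for each i with 0 ≤ i ≤ n, the binary vector 0^{n-i}1^i is the correlation of some pair of words of length n over a binary alphabet. -/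
/-- For every `n > 2` and every `0 ≤ i ≤ n`, the vector `0^{n-i} 1^i` is the
correlation of some pair of words of length `n` over a binary alphabet. -/
theorem stmt14 (n : ℕ) (hn : 2 < n) :
    ∀ i ≤ n, ∃ u v : Fin n → Bool,
      corrF u v = fun k : Fin n => decide (n - i ≤ (k : ℕ)) := by
  intro i hi
  refine ⟨fun _ => false, fun t => decide (i ≤ (t : ℕ)), ?_⟩
  funext k
  simp only [corrF, decide_eq_decide]
  constructor
  · intro h
    by_contra hk
    push_neg at hk
    -- hk : (k : ℕ) < n - i, so k + i < n and i < n
    have hki : (k : ℕ) + i < n := by omega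
    have hin : i < n := by omega
    have := h ⟨(k : ℕ) + i, hki⟩ ⟨i, hin⟩ rfl
    simp at this
  · intro hk j t hjt
    have ht : (t : ℕ) < i := by
      have := j.isLt
      have := k.isLt
      omega
    simp [Nat.not_le.mpr ht]
end
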